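/- arXiv:1902.03805 — 3 statements merged into one kernel-verified Lean document; each statement's English description precedes it below -/
import Mathlib

section
/- Let S be a separable metric space and let X_d (d ∈ ℕ) and X be random elements of S defined on a common probability space (Ω,P). Then X_d converges to X in probability (i.e. for every ε > 0, P(dist(X_d,X) > ε) → 0) if and only if the laws of the pairs (X_d, X) on S × S converge narrowly to the law of (X, X). -/
/-!
Since `dist ((x, z), (y, z)) = dist x y`, convergence in probability of `X_d` to `X` is the same
as convergence in probability of the pairs `(X_d, X)` to `(X, X)`, which implies their convergence
in law. Conversely, the law of `(X, X)` is carried by the diagonal, so the closed set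
`{p | ε ≤ dist p.1 p.2}` is null for it, and the portmanteau theorem gives
`P (ε ≤ dist X_d X) → 0`.
-/

open MeasureTheory ProbabilityTheory Filter Topology

namespace MeasureTheory

variable {ι Ω E : Type*} {mΩ : MeasurableSpace Ω} {μ : Measure Ω} {l : Filter ι}

lemma tendstoInMeasure_iff_measure_lt_dist [PseudoMetricSpace E] {f : ι → Ω → E} {g : Ω → E} :
    TendstoInMeasure μ f l g ↔
      ∀ ε, 0 < ε → Tendsto (fun i ↦ μ {x | ε < dist (f i x) (g x)}) l (𝓝 0) := by
  rw [tendstoInMeasure_iff_dist]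
  refine ⟨fun h ε hε ↦ ?_, fun h ε hε ↦ ?_⟩
  · exact tendsto_of_tendsto_of_tendsto_of_le_of_le tendsto_const_nhds (h ε hε)
      (fun _ ↦ bot_le) fun i ↦ measure_mono fun x (hx : ε < _) ↦ hx.le
  · refine tendsto_of_tendsto_of_tendsto_of_le_of_le tendsto_const_nhds (h (ε / 2) (by positivity))
      (fun _ ↦ bot_le) fun i ↦ measure_mono fun x (hx : ε ≤ _) ↦ ?_
    exact (half_lt_self hε).trans_le hx

lemma tendstoInMeasure_prodMk_right_iff {F : Type*} [PseudoEMetricSpace E] [PseudoEMetricSpace F]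
    {f : ι → Ω → E} {g : Ω → E} {h : Ω → F} :
    TendstoInMeasure μ (fun i x ↦ (f i x, h x)) l (fun x ↦ (g x, h x)) ↔
      TendstoInMeasure μ f l g := by
  simp only [TendstoInMeasure, Prod.edist_eq, edist_self, zero_le, max_eq_left]

variable [PseudoMetricSpace E] [SecondCountableTopology E] [MeasurableSpace E] [BorelSpace E]
  [IsProbabilityMeasure μ]

theorem TendstoInDistribution.tendstoInMeasure_of_prodMk {X : ι → Ω → E} {Z : Ω → E}
    (h : TendstoInDistribution (fun i x ↦ (X i x, Z x)) l (fun x ↦ (Z x, Z x)) (fun _ ↦ μ) μ) :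
    TendstoInMeasure μ X l Z := by
  rw [tendstoInMeasure_iff_dist]
  intro ε hε
  have hF : IsClosed {p : E × E | ε ≤ dist p.1 p.2} := isClosed_le continuous_const continuous_dist
  have hZF : μ.map (fun x ↦ (Z x, Z x)) {p | ε ≤ dist p.1 p.2} = 0 := by
    rw [Measure.map_apply_of_aemeasurable h.aemeasurable_limit hF.measurableSet]
    simp [hε.not_ge]
  have hlim := ProbabilityMeasure.tendsto_measure_of_null_frontier_of_tendsto' h.tendsto
    (measure_mono_null hF.frontier_subset hZF)
  simp only [ProbabilityMeasure.coe_mk, hZF] at hlim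
  convert hlim using 2 with i
  rw [Measure.map_apply_of_aemeasurable (h.forall_aemeasurable i) hF.measurableSet]
  rfl

theorem tendstoInMeasure_iff_tendstoInDistribution_prodMk [l.IsCountablyGenerated] [l.NeBot]
    {X : ι → Ω → E} {Z : Ω → E} (hX : ∀ i, AEMeasurable (X i) μ) (hZ : AEMeasurable Z μ) :
    TendstoInMeasure μ X l Z ↔
      TendstoInDistribution (fun i x ↦ (X i x, Z x)) l (fun x ↦ (Z x, Z x)) (fun _ ↦ μ) μ :=
  ⟨fun h ↦ (tendstoInMeasure_prodMk_right_iff.2 h).tendstoInDistribution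
      fun i ↦ (hX i).prodMk hZ,
    TendstoInDistribution.tendstoInMeasure_of_prodMk⟩

end MeasureTheory

/-- Let `S` be a separable metric space and `X_d`, `X` random elements of `S` on a common
probability space. Then `X_d → X` in probability if and only if the laws of the pairs
`(X_d, X)` converge narrowly on `S × S` to the law of `(X, X)`. -/
theorem tendstoInMeasure_iff_narrow_tendsto_pair_law
    {S : Type} [MetricSpace S] [TopologicalSpace.SeparableSpace S]
    [MeasurableSpace S] [BorelSpace S]
    {Ω : Type} [MeasurableSpace Ω] (P : Measure Ω) [IsProbabilityMeasure P]
    (X : ℕ → Ω → S) (X₀ : Ω → S)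
    (hX : ∀ d, Measurable (X d)) (hX₀ : Measurable X₀) :
    (∀ ε : ℝ, 0 < ε →
        Tendsto (fun d => P {ω | ε < dist (X d ω) (X₀ ω)}) atTop (𝓝 0)) ↔
      (∀ φ : BoundedContinuousFunction (S × S) ℝ,
        Tendsto (fun d => ∫ x, φ x ∂(P.map (fun ω => (X d ω, X₀ ω)))) atTop
          (𝓝 (∫ x, φ x ∂(P.map (fun ω => (X₀ ω, X₀ ω)))))) := by
  have : SecondCountableTopology S := UniformSpace.secondCountable_of_separable S
  have hpair : ∀ d, AEMeasurable (fun ω ↦ (X d ω, X₀ ω)) P :=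
    fun d ↦ ((hX d).prodMk hX₀).aemeasurable
  rw [← tendstoInMeasure_iff_measure_lt_dist,
    tendstoInMeasure_iff_tendstoInDistribution_prodMk (fun d ↦ (hX d).aemeasurable)
      hX₀.aemeasurable]
  exact ⟨fun h ↦ ProbabilityMeasure.tendsto_iff_forall_integral_tendsto.1 h.tendsto,
    fun h ↦ ⟨hpair, (hX₀.prodMk hX₀).aemeasurable,
      ProbabilityMeasure.tendsto_iff_forall_integral_tendsto.2 h⟩⟩
end

section
/- Let E be a separable Banach space, let (ξ_n) be a sequence of independent standard real Gaussian random variables on a probability space (Ω,P), and let (f_n) be a sequence in E. Assume that the partial sums S_N = Σ_{n≤N} ξ_n f_n converge almost surely in E to a random element X of E. Then the support of the law of X equals the closure in E of the linear span of {f_n : n ∈ ℕ}. -/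
open MeasureTheory ProbabilityTheory Filter Topology

/-- The (topological) support of a Borel measure: the set of points all of whose open
neighborhoods have positive measure. -/
def measureSupport {E : Type} [TopologicalSpace E] [MeasurableSpace E] (μ : Measure E) :
    Set E :=
  {x | ∀ U : Set E, IsOpen U → x ∈ U → 0 < μ U}

/-!
Every partial sum lies in the span, so `X` lies a.s. in its closure, which therefore contains
the support. Conversely, let `x = ∑_{n ≤ N} c n • f n` be in the span. Almost surely
`X = S_N + R_N`, where `R_N` is the sum of the tail series; `S_N` and `R_N` are functions of the
disjoint families `(ξ_n)_{n ≤ N}` and `(ξ_n)_{n > N}`, hence independent. The joint law of the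
`ξ_n` charges every open set, so `S_N` is close to `x` with positive probability, and for large
`N` so is `R_N` to `0`; by independence both happen at once with positive probability.
-/

open scoped NNReal
open Metric Set

section Support

variable {E : Type} [TopologicalSpace E] [MeasurableSpace E] {μ : Measure E}

lemma isClosed_measureSupport : IsClosed (measureSupport μ) := by
  refine isOpen_compl_iff.mp (isOpen_iff_forall_mem_open.mpr fun x hx => ?_)
  simp only [measureSupport, mem_compl_iff, mem_ofPred_eq, not_forall, not_lt,
    nonpos_iff_eq_zero] at hx
  obtain ⟨U, hU, hxU, hμU⟩ := hx
  exact ⟨U, fun y hyU hy => (hy U hU hyU).ne' hμU, hU, hxU⟩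

lemma measureSupport_subset_of_ae_mem {s : Set E} (hs : IsClosed s) (h : ∀ᵐ x ∂μ, x ∈ s) :
    measureSupport μ ⊆ s := fun x hx => by
  by_contra hxs
  exact (hx sᶜ hs.isOpen_compl hxs).ne' (ae_iff.mp h)

end Support

lemma subset_measureSupport_of_measure_ball_pos {E : Type} [PseudoMetricSpace E]
    [MeasurableSpace E] {μ : Measure E} {s : Set E}
    (h : ∀ x ∈ s, ∀ ε > 0, 0 < μ (ball x ε)) : s ⊆ measureSupport μ := fun x hx U hU hxU => by
  obtain ⟨ε, hε, hball⟩ := Metric.isOpen_iff.mp hU x hxU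
  exact (h x hx ε hε).trans_le (measure_mono hball)

lemma measurable_iSup_comap {Ω ι β : Type*} [mβ : MeasurableSpace β] (ξ : ι → Ω → β)
    {S : Set ι} {i : ι} (hi : i ∈ S) : Measurable[⨆ j ∈ S, mβ.comap (ξ j)] (ξ i) :=
  measurable_iff_comap_le.mpr (le_iSup₂ (f := fun j (_ : j ∈ S) => mβ.comap (ξ j)) i hi)

namespace ProbabilityTheory

lemma isOpenPosMeasure_gaussianReal (μ : ℝ) {v : ℝ≥0} (hv : v ≠ 0) :
    (gaussianReal μ v).IsOpenPosMeasure :=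
  ⟨fun _ hU hne h0 => hU.measure_ne_zero volume hne (gaussianReal_absolutelyContinuous' μ hv h0)⟩

variable {Ω : Type*} [MeasurableSpace Ω] {P : Measure Ω}

lemma iIndepFun.isOpenPosMeasure_map_pi {ι : Type*} {β : ι → Type*}
    [∀ i, TopologicalSpace (β i)] [∀ i, MeasurableSpace (β i)] [∀ i, OpensMeasurableSpace (β i)]
    {ξ : ∀ i, Ω → β i} (hξmeas : ∀ i, Measurable (ξ i)) (hξindep : iIndepFun ξ P)
    (hfull : ∀ i, (P.map (ξ i)).IsOpenPosMeasure) :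
    (P.map fun ω i => ξ i ω).IsOpenPosMeasure := by
  refine ⟨fun U hU ⟨t, htU⟩ => ?_⟩
  obtain ⟨I, u, hu, hIU⟩ := isOpen_pi_iff.mp hU t htU
  have hbox : 0 < P (⋂ i ∈ I, ξ i ⁻¹' u i) := by
    rw [hξindep.meas_biInter fun i hi => ⟨u i, (hu i hi).1.measurableSet, rfl⟩]
    refine CanonicallyOrderedAdd.prod_pos.mpr fun i hi => ?_
    rw [← Measure.map_apply (hξmeas i) (hu i hi).1.measurableSet]
    exact (hu i hi).1.measure_pos _ ⟨t i, (hu i hi).2⟩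
  refine (hbox.trans_le ?_).ne'
  calc P (⋂ i ∈ I, ξ i ⁻¹' u i) ≤ P ((fun ω i => ξ i ω) ⁻¹' U) :=
        measure_mono fun ω hω => hIU fun i hi => mem_iInter₂.mp hω i hi
    _ ≤ _ := Measure.le_map_apply (measurable_pi_lambda _ hξmeas).aemeasurable U

lemma iIndepFun.indepFun_of_measurable_iSup {ι β γ δ : Type*} [mβ : MeasurableSpace β]
    [MeasurableSpace γ] [MeasurableSpace δ] {ξ : ι → Ω → β} (hξmeas : ∀ i, Measurable (ξ i))
    (hξindep : iIndepFun ξ P) {S T : Set ι} (hST : Disjoint S T) {g : Ω → γ} {h : Ω → δ}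
    (hg : Measurable[⨆ i ∈ S, mβ.comap (ξ i)] g) (hh : Measurable[⨆ i ∈ T, mβ.comap (ξ i)] h) :
    IndepFun g h P := by
  rw [IndepFun_iff_Indep]
  exact indep_of_indep_of_le_right (indep_of_indep_of_le_left
    (indep_iSup_of_disjoint (fun i => (hξmeas i).comap_le) hξindep.iIndep hST)
    hg.comap_le) hh.comap_le

lemma IndepFun.measure_preimage_add_ball_pos {E : Type*} [SeminormedAddCommGroup E]
    [MeasurableSpace E] [OpensMeasurableSpace E] {U V : Ω → E} (hUV : IndepFun U V P)
    {x : E} {r s : ℝ} (hU : 0 < P (U ⁻¹' ball x r)) (hV : 0 < P (V ⁻¹' ball 0 s)) :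
    0 < P ((U + V) ⁻¹' ball x (r + s)) := by
  have hsub : U ⁻¹' ball x r ∩ V ⁻¹' ball 0 s ⊆ (U + V) ⁻¹' ball x (r + s) := by
    rintro ω ⟨hUω, hVω⟩
    rw [mem_preimage, mem_ball_zero_iff] at hVω
    calc dist (U ω + V ω) x ≤ dist (U ω) x + ‖V ω‖ := by
          rw [dist_eq_norm, dist_eq_norm, add_sub_right_comm]; exact norm_add_le _ _
      _ < r + s := add_lt_add hUω hVω
  refine lt_of_lt_of_le ?_ (measure_mono hsub)
  rw [hUV.measure_inter_preimage_eq_mul _ _ measurableSet_ball measurableSet_ball]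
  exact ENNReal.mul_pos hU.ne' hV.ne'

end ProbabilityTheory

lemma exists_measure_dist_lt_pos {Ω E : Type*} [MeasurableSpace Ω] [PseudoMetricSpace E]
    {P : Measure Ω} [NeZero P] {F : ℕ → Ω → E} {G : Ω → E}
    (hconv : ∀ᵐ ω ∂P, Tendsto (fun N => F N ω) atTop (𝓝 (G ω))) {ε : ℝ} (hε : 0 < ε) (N₀ : ℕ) :
    ∃ N ≥ N₀, 0 < P {ω | dist (G ω) (F N ω) < ε} := by
  by_contra! h
  have hfar : ∀ᵐ ω ∂P, ∀ N ≥ N₀, ε ≤ dist (G ω) (F N ω) := by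
    refine ae_all_iff.mpr fun N => ?_
    by_cases hN : N ≥ N₀
    · filter_upwards [measure_eq_zero_iff_ae_notMem.mp (nonpos_iff_eq_zero.mp (h N hN))]
        with ω hω _ using not_lt.mp hω
    · exact ae_of_all _ fun _ hN' => absurd hN' hN
  obtain ⟨ω, hω, hfarω⟩ := (hconv.and hfar).exists
  obtain ⟨N, hN⟩ := ((hω.eventually (ball_mem_nhds _ hε)).and (eventually_ge_atTop N₀)).exists
  exact (hfarω N hN.2).not_gt (mem_ball'.mp hN.1)

section PartialSums

variable {Ω E : Type*} [NormedAddCommGroup E] [NormedSpace ℝ E]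

noncomputable def partialSum (ξ : ℕ → Ω → ℝ) (f : ℕ → E) (N : ℕ) (ω : Ω) : E :=
  ∑ n ∈ Finset.range (N + 1), ξ n ω • f n

-- A `limUnder` rather than `X - partialSum ξ f N`, so that it is measurable for the
-- `σ`-algebra of the `ξ n`, `n > N`.
noncomputable def tailLimit (ξ : ℕ → Ω → ℝ) (f : ℕ → E) (N : ℕ) (ω : Ω) : E :=
  limUnder atTop fun M => ∑ n ∈ Finset.range M, ξ (N + 1 + n) ω • f (N + 1 + n)

lemma tailLimit_eq_sub {ξ : ℕ → Ω → ℝ} {f : ℕ → E} {x : E} {ω : Ω}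
    (hω : Tendsto (fun N => partialSum ξ f N ω) atTop (𝓝 x)) (N : ℕ) :
    tailLimit ξ f N ω = x - partialSum ξ f N ω := by
  refine Tendsto.limUnder_eq ?_
  have hshift := ((tendsto_add_atTop_iff_nat N).mpr hω).sub_const (partialSum ξ f N ω)
  refine hshift.congr fun M => ?_
  rw [partialSum, partialSum, show M + N + 1 = N + 1 + M by ring, Finset.sum_range_add,
    add_sub_cancel_left]

lemma measure_partialSum_preimage_ball_pos [MeasurableSpace Ω] {P : Measure Ω} {ξ : ℕ → Ω → ℝ}
    (hξmeas : ∀ n, Measurable (ξ n)) (hξindep : iIndepFun ξ P)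
    (hfull : ∀ n, (P.map (ξ n)).IsOpenPosMeasure) (f : ℕ → E) (N : ℕ) (c : ℕ → ℝ) {ε : ℝ}
    (hε : 0 < ε) :
    0 < P (partialSum ξ f N ⁻¹' ball (∑ n ∈ Finset.range (N + 1), c n • f n) ε) := by
  have := hξindep.isOpenPosMeasure_map_pi hξmeas hfull
  set Φ : (ℕ → ℝ) → E := fun t => ∑ n ∈ Finset.range (N + 1), t n • f n
  have hΦ : Continuous Φ := by fun_prop
  have hopen : IsOpen (Φ ⁻¹' ball (Φ c) ε) := isOpen_ball.preimage hΦ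
  change 0 < P ((fun ω i => ξ i ω) ⁻¹' (Φ ⁻¹' ball (Φ c) ε))
  rw [← Measure.map_apply (measurable_pi_lambda _ hξmeas) hopen.measurableSet]
  exact hopen.measure_pos _ ⟨c, mem_ball_self hε⟩

variable [MeasurableSpace E] [BorelSpace E] [TopologicalSpace.SeparableSpace E]

lemma measurable_partialSum {m : MeasurableSpace Ω} {ξ : ℕ → Ω → ℝ} (f : ℕ → E) {N : ℕ}
    (hξ : ∀ n ≤ N, Measurable[m] (ξ n)) : Measurable[m] (partialSum ξ f N) := by
  unfold partialSum
  exact Finset.measurable_sum _ fun n hn =>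
    (hξ n (Nat.lt_succ_iff.mp (Finset.mem_range.mp hn))).smul_const _

lemma measurable_tailLimit [CompleteSpace E] {m : MeasurableSpace Ω} {ξ : ℕ → Ω → ℝ}
    (f : ℕ → E) {N : ℕ} (hξ : ∀ n > N, Measurable[m] (ξ n)) :
    Measurable[m] (tailLimit ξ f N) := by
  refine (StronglyMeasurable.limUnder fun M => ?_).measurable
  exact (Finset.measurable_sum _ fun n _ =>
    (hξ (N + 1 + n) (by omega)).smul_const _).stronglyMeasurable

theorem measure_preimage_ball_pos_of_mem_span [CompleteSpace E] [MeasurableSpace Ω]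
    {P : Measure Ω} [IsProbabilityMeasure P] {ξ : ℕ → Ω → ℝ} (hξmeas : ∀ n, Measurable (ξ n))
    (hξindep : iIndepFun ξ P) (hfull : ∀ n, (P.map (ξ n)).IsOpenPosMeasure) {f : ℕ → E}
    {X : Ω → E} (hconv : ∀ᵐ ω ∂P, Tendsto (fun N => partialSum ξ f N ω) atTop (𝓝 (X ω)))
    {x : E} (hx : x ∈ Submodule.span ℝ (range f)) {ε : ℝ} (hε : 0 < ε) :
    0 < P (X ⁻¹' ball x ε) := by
  obtain ⟨c, rfl⟩ := Finsupp.mem_span_range_iff_exists_finsupp.mp hx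
  obtain ⟨N₀, hN₀⟩ := c.support.exists_nat_subset_range
  obtain ⟨N, hN, hclose⟩ := exists_measure_dist_lt_pos hconv (half_pos hε) N₀
  have hc : c.sum (fun n a => a • f n) = ∑ n ∈ Finset.range (N + 1), c n • f n :=
    c.sum_of_support_subset (hN₀.trans (Finset.range_subset_range.mpr (by omega))) _
      fun _ _ => zero_smul ℝ _
  have hX : X =ᵐ[P] partialSum ξ f N + tailLimit ξ f N := hconv.mono fun ω hω => by
    simp [tailLimit_eq_sub hω N]
  have hindep : IndepFun (partialSum ξ f N) (tailLimit ξ f N) P :=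
    hξindep.indepFun_of_measurable_iSup hξmeas (Iic_disjoint_Ioi le_rfl)
      (measurable_partialSum f fun _ hn => measurable_iSup_comap ξ hn)
      (measurable_tailLimit f fun _ hn => measurable_iSup_comap ξ hn)
  have htail : 0 < P (tailLimit ξ f N ⁻¹' ball 0 (ε / 2)) := by
    refine hclose.trans_le (measure_mono_ae (hconv.mono fun ω hω hdist => ?_))
    change tailLimit ξ f N ω ∈ ball 0 (ε / 2)
    rwa [tailLimit_eq_sub hω N, mem_ball_zero_iff, ← dist_eq_norm]
  rw [hc, measure_congr (hX.preimage _), ← add_halves ε]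
  exact hindep.measure_preimage_add_ball_pos
    (measure_partialSum_preimage_ball_pos hξmeas hξindep hfull f N c (half_pos hε)) htail

end PartialSums

/-- Let `E` be a separable Banach space, `(ξ_n)` independent standard real Gaussian variables
and `(f_n)` a sequence in `E` such that the partial sums `S_N = ∑_{n ≤ N} ξ_n f_n` converge
almost surely in `E` to a random element `X`.  Then the support of the law of `X` is the
closed linear span of `{f_n}`. -/
theorem support_of_gaussian_series
    {E : Type} [NormedAddCommGroup E] [NormedSpace ℝ E] [CompleteSpace E]
    [TopologicalSpace.SeparableSpace E] [MeasurableSpace E] [BorelSpace E]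
    {Ω : Type} [MeasurableSpace Ω] (P : Measure Ω) [IsProbabilityMeasure P]
    (ξ : ℕ → Ω → ℝ) (hξmeas : ∀ n, Measurable (ξ n))
    (hξindep : ProbabilityTheory.iIndepFun ξ P)
    (hξgauss : ∀ n, P.map (ξ n) = gaussianReal 0 1)
    (f : ℕ → E) (X : Ω → E) (hXmeas : Measurable X)
    (hconv : ∀ᵐ ω ∂P, Tendsto (fun N => ∑ n ∈ Finset.range (N + 1), ξ n ω • f n)
      atTop (𝓝 (X ω))) :
    measureSupport (P.map X) =
      closure (↑(Submodule.span ℝ (Set.range f)) : Set E) := by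
  have hconv' : ∀ᵐ ω ∂P, Tendsto (fun N => partialSum ξ f N ω) atTop (𝓝 (X ω)) := hconv
  have hfull : ∀ n, (P.map (ξ n)).IsOpenPosMeasure := fun n => by
    rw [hξgauss n]; exact isOpenPosMeasure_gaussianReal 0 one_ne_zero
  have hX_mem : ∀ᵐ ω ∂P, X ω ∈ closure (Submodule.span ℝ (range f) : Set E) :=
    hconv.mono fun ω hω => mem_closure_of_tendsto hω (Eventually.of_forall fun N =>
      Submodule.sum_mem _ fun n _ =>
        Submodule.smul_mem _ _ (Submodule.subset_span (mem_range_self n)))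
  refine (measureSupport_subset_of_ae_mem isClosed_closure ?_).antisymm
    (closure_minimal ?_ isClosed_measureSupport)
  · exact (ae_map_iff hXmeas.aemeasurable isClosed_closure.measurableSet).mpr hX_mem
  · refine subset_measureSupport_of_measure_ball_pos fun x hx ε hε => ?_
    rw [Measure.map_apply hXmeas measurableSet_ball]
    exact measure_preimage_ball_pos_of_mem_span hξmeas hξindep hfull hconv' hx hε
end

section
/- Let U ⊆ ℝ^m be open, r ≥ 1, and let X be a centered Gaussian process on U with values in ℝ^k, defined on a probability space (Ω,P), with almost surely C^r sample paths. Let v ∈ ℝ^m. Then the directional derivative process vX, defined almost surely by (vX)(p) = D_v X(p) (the derivative of the sample path at p in direction v), is a centered Gaussian process on U with almost surely C^{r−1} sample paths; in particular, for any finitely many points p₁,…,p_j ∈ U the random vector ((vX)(p₁),…,(vX)(p_j)) is centered Gaussian. -/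
/-!
The smoothness claim is the fact that on an open set the directional derivative of a `C^(n+1)`
map is `p ↦ Df(p) v`, which is `C^n`.

For Gaussianity, a linear combination of values of `vX` is the almost sure limit, as `t → 0`,
of the same combination of difference quotients `(X(pᵢ + t v) - X(pᵢ)) / t`, each of which is a
combination of values of `X` and hence centered Gaussian. An almost sure limit of laws
`N(0, wₜ)` is again of this form: its characteristic function `φ` is the pointwise limit of
`s ↦ exp(-wₜ s² / 2)`, and since `φ` is continuous with `φ(0) = 1` there is an `s ≠ 0` with
`Re φ(s) > 0`, at which taking logarithms shows that `wₜ` converges to some `W`; then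
`φ(s) = exp(-W s² / 2)` for every `s`.
-/

open MeasureTheory ProbabilityTheory Filter Topology
open scoped NNReal

theorem ContDiffOn.lineDeriv_of_isOpen {𝕜 E F : Type*} [NontriviallyNormedField 𝕜]
    [NormedAddCommGroup E] [NormedSpace 𝕜 E] [NormedAddCommGroup F] [NormedSpace 𝕜 F]
    {f : E → F} {s : Set E} {n : WithTop ℕ∞} (hf : ContDiffOn 𝕜 (n + 1) f s) (hs : IsOpen s)
    (v : E) : ContDiffOn 𝕜 n (fun x => lineDeriv 𝕜 f x v) s :=
  ((hf.fderiv_of_isOpen hs le_rfl).clm_apply contDiffOn_const).congr fun _ hx =>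
    ((hf.differentiableOn (by simp)).differentiableAt (hs.mem_nhds hx)).lineDeriv_eq_fderiv

theorem charFun_gaussianReal_zero (v : ℝ≥0) (t : ℝ) :
    charFun (gaussianReal 0 v) t = (Real.exp (-(v * t ^ 2 / 2)) : ℂ) := by
  rw [charFun_gaussianReal]
  push_cast
  ring_nf

theorem exists_ne_zero_re_charFun_pos {E : Type*} [NormedAddCommGroup E] [InnerProductSpace ℝ E]
    [MeasurableSpace E] [BorelSpace E] [SecondCountableTopology E] [Nontrivial E]
    (μ : Measure E) [IsProbabilityMeasure μ] :
    ∃ t ≠ 0, 0 < (charFun μ t).re := by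
  have hcont : Tendsto (fun t => (charFun μ t).re) (𝓝[≠] 0) (𝓝 1) := by
    simpa [Function.comp_def] using
      ((Complex.continuous_re.comp (continuous_charFun (μ := μ))).tendsto 0).mono_left
        nhdsWithin_le_nhds
  obtain ⟨t, hpos, ht⟩ := ((hcont.eventually (lt_mem_nhds zero_lt_one)).and
    self_mem_nhdsWithin).exists
  exact ⟨t, ht, hpos⟩

theorem exists_tendsto_of_tendsto_charFun_gaussianReal {ι : Type*} {l : Filter ι} [l.NeBot]
    {μ : Measure ℝ} [IsProbabilityMeasure μ] {w : ι → ℝ≥0}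
    (h : ∀ t, Tendsto (fun i => charFun (gaussianReal 0 (w i)) t) l (𝓝 (charFun μ t))) :
    ∃ W : ℝ≥0, Tendsto w l (𝓝 W) := by
  obtain ⟨t, ht, hpos⟩ := exists_ne_zero_re_charFun_pos μ
  have hexp : Tendsto (fun i => Real.exp (-(w i * t ^ 2 / 2))) l (𝓝 (charFun μ t).re) := by
    simpa only [charFun_gaussianReal_zero, Function.comp_def, Complex.ofReal_re] using
      (Complex.continuous_re.tendsto _).comp (h t)
  have hw : Tendsto (fun i => (w i : ℝ)) l (𝓝 (-2 * Real.log (charFun μ t).re / t ^ 2)) := by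
    have hlog := (((Real.continuousAt_log hpos.ne').tendsto.comp hexp).const_mul (-2)).div_const
      (t ^ 2)
    refine hlog.congr fun i => ?_
    simp only [Function.comp_apply, Real.log_exp]
    field_simp
  exact ⟨_, (NNReal.tendsto_coe'.1 hw).2⟩

theorem exists_eq_gaussianReal_of_tendsto_charFun {ι : Type*} {l : Filter ι} [l.NeBot]
    {μ : Measure ℝ} [IsProbabilityMeasure μ] {w : ι → ℝ≥0}
    (h : ∀ t, Tendsto (fun i => charFun (gaussianReal 0 (w i)) t) l (𝓝 (charFun μ t))) :
    ∃ W : ℝ≥0, μ = gaussianReal 0 W := by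
  obtain ⟨W, hW⟩ := exists_tendsto_of_tendsto_charFun_gaussianReal h
  refine ⟨W, Measure.ext_of_charFun (funext fun t => tendsto_nhds_unique (h t) ?_)⟩
  simp_rw [charFun_gaussianReal_zero]
  have hcont : Continuous fun w : ℝ≥0 => (Real.exp (-(w * t ^ 2 / 2)) : ℂ) := by fun_prop
  exact (hcont.tendsto W).comp hW

theorem MeasureTheory.TendstoInDistribution.tendsto_charFun {ι Ω' E : Type*} {Ω : ι → Type*}
    [∀ i, MeasurableSpace (Ω i)] [MeasurableSpace Ω'] [NormedAddCommGroup E]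
    [InnerProductSpace ℝ E] [MeasurableSpace E] [BorelSpace E]
    {X : (i : ι) → Ω i → E} {Z : Ω' → E} {l : Filter ι} {μ : (i : ι) → Measure (Ω i)}
    [∀ i, IsProbabilityMeasure (μ i)] {μ' : Measure Ω'} [IsProbabilityMeasure μ']
    (h : TendstoInDistribution X l Z μ μ') (t : E) :
    Tendsto (fun i => charFun ((μ i).map (X i)) t) l (𝓝 (charFun (μ'.map Z) t)) := by
  have := (ProbabilityMeasure.tendsto_iff_forall_integral_rclike_tendsto ℂ).1 h.tendsto
    (BoundedContinuousFunction.innerProbChar t)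
  simpa [charFun_eq_integral_innerProbChar] using this

theorem exists_map_eq_gaussianReal_of_ae_tendsto {ι Ω : Type*} {l : Filter ι} [l.NeBot]
    [l.IsCountablyGenerated] [MeasurableSpace Ω] {P : Measure Ω} [IsProbabilityMeasure P]
    {Y : ι → Ω → ℝ} {Z : Ω → ℝ} (hY : ∀ i, ∃ w : ℝ≥0, P.map (Y i) = gaussianReal 0 w)
    (hlim : ∀ᵐ ω ∂P, Tendsto (fun i => Y i ω) l (𝓝 (Z ω))) :
    ∃ W : ℝ≥0, P.map Z = gaussianReal 0 W := by
  choose w hw using hY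
  have hYm : ∀ i, AEMeasurable (Y i) P := fun i =>
    aemeasurable_of_map_neZero (by rw [hw i]; infer_instance)
  have hZm : AEMeasurable Z P := aemeasurable_of_tendsto_metrizable_ae l hYm hlim
  have : IsProbabilityMeasure (P.map Z) := Measure.isProbabilityMeasure_map hZm
  refine exists_eq_gaussianReal_of_tendsto_charFun (l := l) (w := w) fun t => ?_
  simpa [hw] using (tendstoInDistribution_of_ae_tendsto hYm hZm hlim).tendsto_charFun t

-- Degenerate laws are included: `gaussianReal 0 0` is the Dirac mass at `0`.
def IsCenteredGaussianOn {Ω T : Type*} [MeasurableSpace Ω] {k : ℕ} (P : Measure Ω)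
    (X : Ω → T → Fin k → ℝ) (U : Set T) : Prop :=
  ∀ (j : ℕ) (p : Fin j → T), (∀ i, p i ∈ U) → ∀ c : Fin j → Fin k → ℝ, ∃ v : ℝ≥0,
    P.map (fun ω => ∑ i, ∑ l, c i l * X ω (p i) l) = gaussianReal 0 v

namespace IsCenteredGaussianOn

variable {Ω : Type*} [MeasurableSpace Ω] {k : ℕ} {P : Measure Ω}

theorem exists_map_sum_sub {T : Type*} {X : Ω → T → Fin k → ℝ} {U : Set T}
    (hX : IsCenteredGaussianOn P X U) {j : ℕ} {p q : Fin j → T}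
    (hp : ∀ i, p i ∈ U) (hq : ∀ i, q i ∈ U) (c : Fin j → Fin k → ℝ) :
    ∃ v : ℝ≥0, P.map (fun ω => ∑ i, ∑ l, c i l * (X ω (q i) l - X ω (p i) l)) =
      gaussianReal 0 v := by
  have hqp : ∀ i, Fin.append q p i ∈ U := Fin.addCases
    (fun i => by rw [Fin.append_left]; exact hq i) (fun i => by rw [Fin.append_right]; exact hp i)
  obtain ⟨v, hv⟩ := hX (j + j) (Fin.append q p) hqp (Fin.append c (-c))
  refine ⟨v, hv ▸ congrArg (P.map ·) (funext fun ω => ?_)⟩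
  simp only [Fin.sum_univ_add, Fin.append_left, Fin.append_right, Pi.neg_apply, neg_mul,
    Finset.sum_neg_distrib, mul_sub, Finset.sum_sub_distrib]
  exact sub_eq_add_neg _ _

theorem lineDeriv {E : Type*} [NormedAddCommGroup E] [NormedSpace ℝ E] {X : Ω → E → Fin k → ℝ}
    {U : Set E} [IsProbabilityMeasure P] (hX : IsCenteredGaussianOn P X U) (hU : IsOpen U)
    (hdiff : ∀ᵐ ω ∂P, DifferentiableOn ℝ (X ω) U) (v : E) :
    IsCenteredGaussianOn P (fun ω p => lineDeriv ℝ (X ω) p v) U := by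
  intro j p hp c
  set S : Set ℝ := {t | t ≠ 0 ∧ ∀ i, p i + t • v ∈ U}
  have hS : S ∈ 𝓝[≠] 0 := by
    refine inter_mem self_mem_nhdsWithin
      (mem_nhdsWithin_of_mem_nhds (eventually_all.2 fun i => ?_))
    have hline : Continuous fun t : ℝ => p i + t • v := by fun_prop
    exact hline.continuousAt.preimage_mem_nhds (by simpa using hU.mem_nhds (hp i))
  -- Index the difference quotients by the step sizes that keep every `p i + t • v` in `U`.
  set F := comap ((↑) : S → ℝ) (𝓝 0)
  have : F.NeBot := mem_closure_iff_comap_neBot.1 (mem_closure_iff_frequently.2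
    ((Eventually.frequently hS).filter_mono nhdsWithin_le_nhds))
  have hval : Tendsto ((↑) : S → ℝ) F (𝓝[≠] 0) :=
    tendsto_nhdsWithin_iff.2 ⟨tendsto_comap, .of_forall fun s => s.2.1⟩
  refine exists_map_eq_gaussianReal_of_ae_tendsto (l := F)
    (Y := fun s ω => ∑ i, ∑ l,
      (c i l * (s : ℝ)⁻¹) * (X ω (p i + (s : ℝ) • v) l - X ω (p i) l))
    (fun s => hX.exists_map_sum_sub hp s.2.2 _) ?_
  filter_upwards [hdiff] with ω hω
  refine tendsto_finsetSum _ fun i _ => tendsto_finsetSum _ fun l _ => ?_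
  have hslope := ((hω.differentiableAt (hU.mem_nhds (hp i))).lineDifferentiableAt
    (v := v)).hasLineDerivAt.tendsto_slope_zero.comp hval
  convert ((continuous_apply l).tendsto _).comp hslope |>.const_mul (c i l) using 1
  ext s
  simp [mul_assoc]

end IsCenteredGaussianOn

/-- Let `U ⊆ ℝ^m` be open, `r ≥ 1`, and `X` a centered Gaussian process on `U` with values in
`ℝ^k` and almost surely `C^r` sample paths.  For `v ∈ ℝ^m`, the directional derivative process
`vX(p) = D_v X(p)` has almost surely `C^{r−1}` sample paths on `U` and is again a centered
Gaussian process on `U`: all its finite-dimensional evaluations are centered Gaussian. -/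
theorem directional_derivative_of_gaussian_process
    {m k : ℕ} (r : ℕ) (hr : 1 ≤ r)
    (U : Set (EuclideanSpace ℝ (Fin m))) (hU : IsOpen U)
    {Ω : Type} [MeasurableSpace Ω] (P : Measure Ω) [IsProbabilityMeasure P]
    (X : Ω → EuclideanSpace ℝ (Fin m) → Fin k → ℝ)
    -- almost surely `C^r` sample paths on `U`
    (hpaths : ∀ᵐ ω ∂P, ContDiffOn ℝ r (X ω) U)
    -- `X` is a centered Gaussian process on `U` with values in `ℝ^k`
    (hgauss : ∀ (j : ℕ) (p : Fin j → EuclideanSpace ℝ (Fin m)), (∀ i, p i ∈ U) →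
      ∀ c : Fin j → Fin k → ℝ, ∃ v : NNReal,
        P.map (fun ω => ∑ i, ∑ l, c i l * X ω (p i) l) = gaussianReal 0 v)
    (v : EuclideanSpace ℝ (Fin m)) :
    -- `vX` has almost surely `C^{r-1}` sample paths on `U`
    (∀ᵐ ω ∂P, ContDiffOn ℝ (r - 1 : ℕ) (fun p => lineDeriv ℝ (X ω) p v) U) ∧
    -- `vX` is a centered Gaussian process on `U`
    (∀ (j : ℕ) (p : Fin j → EuclideanSpace ℝ (Fin m)), (∀ i, p i ∈ U) →
      ∀ c : Fin j → Fin k → ℝ, ∃ w : NNReal,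
        P.map (fun ω => ∑ i, ∑ l, c i l * lineDeriv ℝ (X ω) (p i) v l) =
          gaussianReal 0 w) := by
  obtain ⟨n, rfl⟩ : ∃ n, r = n + 1 := ⟨r - 1, (Nat.sub_add_cancel hr).symm⟩
  have hsmooth : ∀ᵐ ω ∂P, ContDiffOn ℝ ((n : WithTop ℕ∞) + 1) (X ω) U := by
    simpa using hpaths
  refine ⟨?_, IsCenteredGaussianOn.lineDeriv hgauss hU ?_ v⟩
  · filter_upwards [hsmooth] with ω hω
    simpa using hω.lineDeriv_of_isOpen hU v
  · filter_upwards [hsmooth] with ω hω using hω.differentiableOn (by simp)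
end
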